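/- Let a₀, ..., a_k, b₀, ..., b_k ∈ W_() be bracket worms. If a_j ⊴ b_j for every j with 0 ≤ j ≤ k, then (a₀)...(a_k) ⊴ (b₀)...(b_k) (where (a₀)...(a_k) denotes the bracket worm (a₀)(a₁)...(a_k)⊤). -/

import Mathlib

open Ordinal

/-- `derivBFamily` as in the older Mathlib (removed since): the derivative of the
family `familyOfBFamily o f`. -/
noncomputable def derivBFamily.{u, v} (o : Ordinal.{u})
    (f : ∀ b < o, Ordinal.{max u v} → Ordinal.{max u v}) :
    Ordinal.{max u v} → Ordinal.{max u v} :=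
  derivFamily (familyOfBFamily o f)

/-- The binary Veblen function: `veblen 0 β = ω ^ β` and, for `α > 0`, `veblen α`
enumerates the common fixed points of the functions `veblen ξ` for `ξ < α`. -/
noncomputable def veblen (α : Ordinal.{0}) : Ordinal.{0} → Ordinal.{0} :=
  if α = 0 then fun β => omega0 ^ β
  else derivBFamily.{0, 0} α fun ξ h => veblen ξ
termination_by α
decreasing_by exact h

/-- The Feferman–Schütte ordinal `Γ₀`: the least nonzero ordinal closed under the
binary Veblen function. -/
noncomputable def Gamma0 : Ordinal.{0} :=
  sInf {L | 0 < L ∧ ∀ α < L, ∀ β < L, _root_.veblen α β < L}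

/-- Strictly positive modal formulas with modalities indexed by ordinals. -/
inductive RCF : Type 1 where
  | top : RCF
  | var : ℕ → RCF
  | and : RCF → RCF → RCF
  | dia : Ordinal.{0} → RCF → RCF

/-- `φ.bounded Λ` holds iff all modalities occurring in `φ` are `< Λ`,
i.e. iff `φ` is an `RC_Λ`-formula. -/
def RCF.bounded (Λ : Ordinal) : RCF → Prop
  | .top => True
  | .var _ => True
  | .and φ ψ => φ.bounded Λ ∧ ψ.bounded Λ
  | .dia α φ => α < Λ ∧ φ.bounded Λ

/-- Worms: formulas built from `⊤` by prefixing modalities. -/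
def RCF.isWorm : RCF → Prop
  | .top => True
  | .var _ => False
  | .and _ _ => False
  | .dia _ φ => φ.isWorm

/-- The signature of a formula: the set of ordinals occurring in its modalities. -/
def RCF.sig : RCF → Set Ordinal
  | .top => ∅
  | .var _ => ∅
  | .and φ ψ => φ.sig ∪ ψ.sig
  | .dia α φ => insert α φ.sig

/-- Derivability in the reflection calculus `RC_Λ`. -/
inductive RCder (Λ : Ordinal) : RCF → RCF → Prop where
  | id : ∀ φ, φ.bounded Λ → RCder Λ φ φ
  | topI : ∀ φ, φ.bounded Λ → RCder Λ φ .top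
  | andE₁ : ∀ φ ψ, φ.bounded Λ → ψ.bounded Λ → RCder Λ (.and φ ψ) φ
  | andE₂ : ∀ φ ψ, φ.bounded Λ → ψ.bounded Λ → RCder Λ (.and φ ψ) ψ
  | diaTrans : ∀ α φ, α < Λ → φ.bounded Λ → RCder Λ (.dia α (.dia α φ)) (.dia α φ)
  | diaDown : ∀ α β φ, β < α → α < Λ → φ.bounded Λ → RCder Λ (.dia α φ) (.dia β φ)
  | diaConj : ∀ α β φ ψ, β < α → α < Λ → φ.bounded Λ → ψ.bounded Λ →
      RCder Λ (.and (.dia α φ) (.dia β ψ)) (.dia α (.and φ (.dia β ψ)))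
  | andI : ∀ {φ ψ χ}, RCder Λ φ ψ → RCder Λ φ χ → RCder Λ φ (.and ψ χ)
  | cut : ∀ {φ ψ χ}, RCder Λ φ ψ → RCder Λ ψ χ → RCder Λ φ χ
  | diaMono : ∀ {φ ψ} (α), α < Λ → RCder Λ φ ψ → RCder Λ (.dia α φ) (.dia α ψ)

/-- Membership in `W_{Γ₀}`: worms of `RC_{Γ₀}`. -/
def isGWorm (A : RCF) : Prop := A.isWorm ∧ A.bounded Gamma0

/-- `WormLT B A` is the consistency ordering `B <₀ A` on worms of `W_{Γ₀}`:
`A ⊢_{RC_{Γ₀}} ⟨0⟩B`. -/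
def WormLT (B A : RCF) : Prop :=
  isGWorm A ∧ isGWorm B ∧ RCder Gamma0 A (.dia 0 B)

/- The order type `o A` of a worm, defined recursively by
`o A = sup_{B <₀ A} (o B + 1)` (well-defined since `<₀` is well-founded). -/
open Classical in
noncomputable def wormO (A : RCF) : Ordinal.{0} :=
  if h : WellFounded WormLT then
    h.fix (C := fun _ => Ordinal.{0})
      (fun B ih => ⨆ C : {C : RCF // WormLT C B}, (ih C.1 C.2 + 1)) A
  else 0

/-- Bracket worms `W_()`: `⊤ ∈ W_()` and `(a)b ∈ W_()` for `a, b ∈ W_()`.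
`BW.cons a b` denotes `(a)b`. -/
inductive BW : Type where
  | top : BW
  | cons : BW → BW → BW
deriving DecidableEq

/-- The translation `* : W_() → W_{Γ₀}`: `⊤* = ⊤` and `((a)b)* = ⟨o(a*)⟩ b*`. -/
noncomputable def BW.star : BW → RCF
  | .top => .top
  | .cons a b => .dia (wormO a.star) b.star

/-- `o*(a) = o(a*)`. -/
noncomputable def ostar (a : BW) : Ordinal.{0} := wormO a.star

/-- BC-formulas `F_()`. `BCF.dia a φ` denotes `(a)φ`. -/
inductive BCF : Type where
  | top : BCF
  | var : ℕ → BCF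
  | and : BCF → BCF → BCF
  | dia : BW → BCF → BCF

/-- A bracket worm regarded as a BC-formula. -/
def BW.toF : BW → BCF
  | .top => .top
  | .cons a b => .dia a b.toF

/-- Derivability in the Bracket Calculus `BC`.  The side conditions `b ⊴ a`
(`a ⊢ (⊤)b` or `a ⊢ b`) and `b ◁ a` (`a ⊢ (⊤)b`) are inlined, the two
disjuncts of `⊴` being split into separate constructors. -/
inductive BCder : BCF → BCF → Prop where
  | id : ∀ φ, BCder φ φ
  | topI : ∀ φ, BCder φ .top
  | andE₁ : ∀ φ ψ, BCder (.and φ ψ) φ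
  | andE₂ : ∀ φ ψ, BCder (.and φ ψ) ψ
  | andI : ∀ {φ ψ χ}, BCder φ ψ → BCder φ χ → BCder φ (.and ψ χ)
  | cut : ∀ {φ ψ χ}, BCder φ ψ → BCder ψ χ → BCder φ χ
  | mono₁ : ∀ {φ ψ} (a b : BW), BCder φ ψ → BCder a.toF (.dia .top b.toF) →
      BCder (.dia a φ) (.dia b ψ)
  | mono₂ : ∀ {φ ψ} (a b : BW), BCder φ ψ → BCder a.toF b.toF →
      BCder (.dia a φ) (.dia b ψ)
  | trans₁ : ∀ {φ ψ} (a b : BW), BCder φ ψ → BCder a.toF (.dia .top b.toF) →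
      BCder (.dia a (.dia b φ)) (.dia b ψ)
  | trans₂ : ∀ {φ ψ} (a b : BW), BCder φ ψ → BCder a.toF b.toF →
      BCder (.dia a (.dia b φ)) (.dia b ψ)
  | conj : ∀ {φ ψ} (a b : BW), BCder a.toF (.dia .top b.toF) →
      BCder (.and (.dia a φ) (.dia b ψ)) (.dia a (.and φ (.dia b ψ)))

/-- `bcLT b a` is `b ◁ a`, i.e. `a ⊢_BC (⊤)b`. -/
def bcLT (b a : BW) : Prop := BCder a.toF (.dia .top b.toF)

/-- `bcLE b a` is `b ⊴ a`, i.e. `a ⊢_BC (⊤)b` or `a ⊢_BC b`. -/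
def bcLE (b a : BW) : Prop := bcLT b a ∨ BCder a.toF b.toF

/-- The list `[a₁, ..., a_m]` of components of the bracket worm `(a₁)...(a_m)⊤`. -/
def BW.toList : BW → List BW
  | .top => []
  | .cons a b => a :: b.toList

/-- The bracket worm `(a₁)...(a_m)⊤` with components `[a₁, ..., a_m]`. -/
def BW.ofList : List BW → BW
  | [] => .top
  | a :: l => .cons a (ofList l)

open Classical in
/- Fundamental sequences for bracket worms.  For `a = (a₁)(a₂)...(a_m)`:
`⊤{n} = ⊤`; if `a₁ = ⊤` then `a{n} = (a₂)...(a_m)`; otherwise, with `ℓ` least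
such that `a_ℓ ◁ a₁` (and `ℓ = m + 1` if there is none),
`b = (a₁{n})(a₂)...(a_{ℓ-1})`, `c = (a_ℓ)...(a_m)`, we set `a{n} = b^{n+1} c`. -/
noncomputable def BW.fs : BW → ℕ → BW
  | .top, _ => .top
  | .cons a₁ rest, n =>
    if a₁ = .top then rest
    else
      let L := rest.toList
      let j := if h : ∃ i, i < L.length ∧ bcLT (L.getD i .top) a₁ then Nat.find h
               else L.length
      BW.ofList ((List.replicate (n + 1) (BW.fs a₁ n :: L.take j)).flatten ++ L.drop j)
termination_by a _ => a

/-- Iterated fundamental sequences on bracket worms: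
`a⟦0⟧ = a`, `a⟦n+1⟧ = a⟦n⟧{n+1}`. -/
noncomputable def BW.fsIter (a : BW) : ℕ → BW
  | 0 => a
  | n + 1 => (a.fsIter n).fs (n + 1)

theorem BCder.dia_of_bcLE {φ ψ : BCF} {a b : BW} (hba : bcLE b a) (hφψ : BCder φ ψ) :
    BCder (.dia a φ) (.dia b ψ) :=
  hba.elim (BCder.mono₁ a b hφψ) (BCder.mono₂ a b hφψ)

theorem BCder.ofList_of_forall₂_bcLE {la lb : List BW} (h : List.Forall₂ bcLE la lb) :
    BCder (BW.ofList lb).toF (BW.ofList la).toF := by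
  induction h with
  | nil => exact BCder.id _
  | cons hab _ ih => exact BCder.dia_of_bcLE hab ih

/-- If `a_j ⊴ b_j` for every `j ≤ k`, then `(a₀)...(a_k) ⊴ (b₀)...(b_k)`. -/
theorem bracket_mono (k : ℕ) (a b : Fin (k + 1) → BW)
    (h : ∀ j, bcLE (a j) (b j)) :
    bcLE (BW.ofList (List.ofFn a)) (BW.ofList (List.ofFn b)) := by
  refine Or.inr (BCder.ofList_of_forall₂_bcLE ?_)
  refine List.forall₂_of_length_eq_of_get (by simp) fun i _ _ => ?_
  rw [List.get_ofFn, List.get_ofFn]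
  exact h _
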